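/- arXiv:1811.01230 — 2 statements merged into one kernel-verified Lean document; each statement's English description precedes it below -/
import Mathlib

section
/- Let R be a commutative local ring, n ≥ 3, and f = (f₁, f₂, ..., fₙ) a unimodular row over R[x] with f₁ monic. Then f is equivalent under Eₙ(R[x]) to the row f(0) = (f₁(0), ..., fₙ(0)), and f(0) is equivalent under Eₙ(R) to (1, 0, ..., 0). -/
/-!
Induction on `d`, for an entry of degree at most `d` whose coefficient of `X ^ d` is a unit
(initially the monic `f₁`). Reducing the other entries modulo this entry brings them below
degree `d`. The row stays unimodular modulo the maximal ideal `𝔪`, where this entry is not a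
unit, so some other entry `f_j` is nonzero modulo `𝔪`. Adding, if necessary, a multiple
`X ^ k f_j` to a third entry (here `n ≥ 3` is used) gives that entry degree exactly `d - 1`
modulo `𝔪`, and reducing it modulo the pivot again yields an entry of degree at most `d - 1`
with a unit coefficient of `X ^ (d - 1)`. In degree `0` the entry is a unit and the row clears
to `e₁`. Evaluating `f ~ e₁` at `0` gives `f(0) ~ e₁` over `R`, and mapping this back along `C`
gives `f ~ f(0)`.
-/

open Matrix Polynomial

/-- The set of elementary matrices (transvections) over a commutative ring. -/
def ElemSet (ι R : Type) [Fintype ι] [DecidableEq ι] [CommRing R] :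
    Set (Matrix ι ι R) :=
  { M | ∃ i j : ι, ∃ a : R, i ≠ j ∧ M = Matrix.transvection i j a }

/-- The elementary subgroup `E_n(R)`, as the multiplicative closure of the
elementary matrices (it is closed under inverses, hence a group). -/
def Elem (ι R : Type) [Fintype ι] [DecidableEq ι] [CommRing R] :
    Submonoid (Matrix ι ι R) :=
  Submonoid.closure (ElemSet ι R)

/-- A row is unimodular if its entries generate the unit ideal. -/
def IsUnimodular {ι R : Type} [CommRing R] (v : ι → R) : Prop :=
  Ideal.span (Set.range v) = ⊤

/-- Two rows are equivalent under the elementary group if one is obtained from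
the other by right multiplication by an element of `E_n(R)`. -/
def RowEquivE {ι R : Type} [Fintype ι] [DecidableEq ι] [CommRing R]
    (v w : ι → R) : Prop :=
  ∃ E ∈ Elem ι R, Matrix.vecMul v E = w

section

variable {ι A B : Type} [CommRing A] [CommRing B]

lemma IsUnimodular.map {v : ι → A} (hv : IsUnimodular v) (φ : A →+* B) :
    IsUnimodular (fun i => φ (v i)) := by
  have h := congrArg (Ideal.map φ) hv
  rwa [Ideal.map_span, Ideal.map_top, ← Set.range_comp] at h

lemma IsUnimodular.exists_ne_ne_zero {v : ι → A} (hv : IsUnimodular v) {i : ι}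
    (hi : ¬IsUnit (v i)) : ∃ j ≠ i, v j ≠ 0 := by
  by_contra! h
  refine hi ?_
  rw [← Ideal.span_singleton_eq_top, eq_top_iff, ← hv, Ideal.span_le]
  rintro _ ⟨j, rfl⟩
  by_cases hj : j = i
  · exact hj ▸ Ideal.mem_span_singleton_self _
  · simp [h j hj]

variable [Fintype ι] [DecidableEq ι]

lemma transvection_mem_elem {i j : ι} (hij : i ≠ j) (c : A) : transvection i j c ∈ Elem ι A :=
  Submonoid.subset_closure ⟨i, j, c, hij, rfl⟩

lemma exists_mul_eq_one_of_mem_elem {M : Matrix ι ι A} (hM : M ∈ Elem ι A) :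
    ∃ N ∈ Elem ι A, M * N = 1 := by
  induction hM using Submonoid.closure_induction with
  | mem x hx =>
    obtain ⟨i, j, a, hij, rfl⟩ := hx
    refine ⟨transvection i j (-a), transvection_mem_elem hij _, ?_⟩
    rw [transvection_mul_transvection_same _ _ hij, add_neg_cancel, transvection_zero]
  | one => exact ⟨1, one_mem _, mul_one 1⟩
  | mul x y _ _ ihx ihy =>
    obtain ⟨Nx, hNx, hx⟩ := ihx
    obtain ⟨Ny, hNy, hy⟩ := ihy
    exact ⟨Ny * Nx, mul_mem hNy hNx, by rw [mul_assoc, ← mul_assoc y, hy, one_mul, hx]⟩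

lemma mapMatrix_mem_elem (φ : A →+* B) {M : Matrix ι ι A} (hM : M ∈ Elem ι A) :
    φ.mapMatrix M ∈ Elem ι B := by
  induction hM using Submonoid.closure_induction with
  | mem x hx =>
    obtain ⟨i, j, a, hij, rfl⟩ := hx
    convert transvection_mem_elem hij (φ a)
    ext k l
    simp [transvection, single_apply, one_apply, apply_ite φ]
  | one => simp [one_mem]
  | mul x y _ _ ihx ihy => simpa using mul_mem ihx ihy

lemma Matrix.vecMul_single (v : ι → A) (i j : ι) (c : A) :
    v ᵥ* Matrix.single i j c = Pi.single j (v i * c) := by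
  ext k
  simp [vecMul, dotProduct, single_apply, Pi.single_apply, eq_comm, ite_and]

namespace RowEquivE

lemma refl (v : ι → A) : RowEquivE v v :=
  ⟨1, one_mem _, vecMul_one v⟩

lemma trans {u v w : ι → A} (h₁ : RowEquivE u v) (h₂ : RowEquivE v w) : RowEquivE u w := by
  obtain ⟨E, hE, rfl⟩ := h₁
  obtain ⟨F, hF, rfl⟩ := h₂
  exact ⟨E * F, mul_mem hE hF, (vecMul_vecMul _ _ _).symm⟩

lemma symm {v w : ι → A} (h : RowEquivE v w) : RowEquivE w v := by
  obtain ⟨E, hE, rfl⟩ := h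
  obtain ⟨N, hN, hEN⟩ := exists_mul_eq_one_of_mem_elem hE
  exact ⟨N, hN, by rw [vecMul_vecMul, hEN, vecMul_one]⟩

lemma map (φ : A →+* B) {v w : ι → A} (h : RowEquivE v w) :
    RowEquivE (fun i => φ (v i)) (fun i => φ (w i)) := by
  obtain ⟨E, hE, rfl⟩ := h
  refine ⟨φ.mapMatrix E, mapMatrix_mem_elem φ hE, ?_⟩
  ext k
  simp [vecMul, dotProduct, map_sum]

lemma span_range_le {v w : ι → A} (h : RowEquivE v w) :
    Ideal.span (Set.range w) ≤ Ideal.span (Set.range v) := by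
  obtain ⟨E, -, rfl⟩ := h
  rw [Ideal.span_le]
  rintro _ ⟨j, rfl⟩
  exact Ideal.sum_mem _ fun i _ => Ideal.mul_mem_right _ _ (Ideal.subset_span ⟨i, rfl⟩)

lemma isUnimodular {v w : ι → A} (h : RowEquivE v w) (hv : IsUnimodular v) :
    IsUnimodular w :=
  top_le_iff.mp (hv ▸ h.symm.span_range_le)

lemma add_single_mul (v : ι → A) {i j : ι} (hij : i ≠ j) (c : A) :
    RowEquivE v (v + Pi.single j (v i * c)) :=
  ⟨transvection i j c, transvection_mem_elem hij c, by
    rw [transvection, vecMul_add, vecMul_one, vecMul_single]⟩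

lemma add_smul_of_apply_eq_zero (v : ι → A) {i : ι} {c : ι → A} (hc : c i = 0) :
    RowEquivE v (v + v i • c) := by
  have hsum : ∑ k ∈ Finset.univ.erase i, Pi.single k (c k) = c := by
    rw [Finset.sum_erase _ (by simp [hc]), Finset.univ_sum_single]
  suffices h : c i = 0 ∧ ∀ w : ι → A, RowEquivE w (w + w i • c) from h.2 v
  rw [← hsum]
  refine Finset.sum_induction _ (fun x => x i = 0 ∧ ∀ w : ι → A, RowEquivE w (w + w i • x))
    (fun x y ⟨hx, hx'⟩ ⟨hy, hy'⟩ => ⟨by simp [hx, hy], fun w => ?_⟩)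
    ⟨rfl, fun w => by simpa using refl w⟩ (fun k hk => ⟨?_, fun w => ?_⟩)
  · convert (hx' w).trans (hy' (w + w i • x)) using 1
    simp [hx, smul_add, add_assoc]
  · simp [Finset.ne_of_mem_erase hk]
  · have h := add_single_mul w (Finset.ne_of_mem_erase hk).symm (c k)
    rwa [← smul_eq_mul, Pi.single_smul'] at h

lemma map_single (φ : A →+* B) {v : ι → A} {i : ι}
    (h : RowEquivE v (Pi.single i 1)) : RowEquivE (fun k => φ (v k)) (Pi.single i 1) := by
  convert h.map φ using 1
  ext k
  simp [Pi.single_apply, apply_ite φ]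

lemma update_of_isUnit {v : ι → A} {q i : ι} (hq : IsUnit (v q)) (hqi : q ≠ i) (b : A) :
    RowEquivE v (Function.update v i b) := by
  convert add_single_mul v hqi (↑hq.unit⁻¹ * (b - v i)) using 1
  ext k
  by_cases hk : k = i
  · subst hk
    simp [← mul_assoc]
  · simp [hk]

lemma single_of_apply_eq_one {v : ι → A} {i : ι} (h : v i = 1) :
    RowEquivE v (Pi.single i 1) := by
  convert add_smul_of_apply_eq_zero v (i := i) (c := Pi.single i 1 - v) (by simp [h]) using 1
  simp [h]

lemma single_of_isUnit (hι : 1 < Fintype.card ι) (i : ι) {v : ι → A} {p : ι}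
    (hp : IsUnit (v p)) : RowEquivE v (Pi.single i 1) := by
  suffices key : ∀ w : ι → A, ∀ q ≠ i, IsUnit (w q) → RowEquivE w (Pi.single i 1) by
    by_cases hpi : p = i
    · subst hpi
      obtain ⟨q, hq⟩ := Fintype.exists_ne_of_one_lt_card hι p
      exact (update_of_isUnit hp hq.symm 1).trans (key _ q hq (by simp))
    · exact key v p hpi hp
  intro w q hq hwq
  exact (update_of_isUnit hwq hq 1).trans (single_of_apply_eq_one (by simp))

lemma modByMonic_of_eq_C_mul (f : ι → A[X]) {i : ι} {g : A[X]} (a : A) (hg : g = C a * f i) :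
    RowEquivE f (fun k => if k = i then f i else f k %ₘ g) := by
  convert add_smul_of_apply_eq_zero f (i := i)
    (c := fun k => if k = i then 0 else -(f k /ₘ g * C a)) (by simp) using 1
  ext1 k
  by_cases hk : k = i
  · simp [hk]
  · simp only [hk, if_false, Pi.add_apply, Pi.smul_apply, smul_eq_mul, modByMonic_eq_sub_mul_div,
      hg]
    ring

end RowEquivE

end

lemma Polynomial.exists_isUnit_and_monic_C_mul {A : Type} [CommRing A] {p : A[X]}
    (h : IsUnit p.leadingCoeff) : ∃ a : A, IsUnit a ∧ (C a * p).Monic :=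
  ⟨_, Units.isUnit h.unit⁻¹, by
    simpa [Units.smul_def, smul_eq_C_mul] using monic_of_isUnit_leadingCoeff_inv_smul h⟩

lemma Polynomial.map_modByMonic_eq_self {A B : Type} [CommRing A] [CommRing B] [Nontrivial B]
    (φ : A →+* B) {p g : A[X]} (hg : g.Monic) (h : (p.map φ).degree < g.degree) :
    (p %ₘ g).map φ = p.map φ := by
  rwa [map_modByMonic φ hg, modByMonic_eq_self_iff (hg.map φ), hg.degree_map]

lemma RowEquivE.exists_degree_map_eq {ι A K : Type} [Fintype ι] [DecidableEq ι] [CommRing A]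
    [CommRing K] [IsDomain K] (φ : A →+* K) (f : ι → A[X]) {d : ℕ} {i j p : ι}
    (hpi : p ≠ i) (hpj : p ≠ j) (hj : (f j).map φ ≠ 0) (hjd : ((f j).map φ).degree ≤ d)
    (hpd : ((f p).map φ).degree ≤ d) :
    ∃ f', RowEquivE f f' ∧ f' i = f i ∧ ((f' p).map φ).degree = d := by
  by_cases h : ((f p).map φ).degree = d
  · exact ⟨f, refl f, rfl, h⟩
  set e := ((f j).map φ).natDegree
  have he : e ≤ d := natDegree_le_iff_degree_le.mpr hjd
  have hshift : ((f j).map φ * X ^ (d - e)).degree = (d : WithBot ℕ) := by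
    rw [degree_mul, degree_X_pow, degree_eq_natDegree hj]
    norm_cast
    omega
  refine ⟨f + Pi.single p (f j * X ^ (d - e)), add_single_mul f hpj.symm _,
    by simp [hpi.symm], ?_⟩
  simp only [Pi.add_apply, Pi.single_eq_same, Polynomial.map_add, Polynomial.map_mul,
    Polynomial.map_pow, map_X]
  rw [degree_add_eq_right_of_degree_lt (hshift ▸ lt_of_le_of_ne hpd h), hshift]

section LocalRing

open IsLocalRing

variable {ι R : Type} [Fintype ι] [DecidableEq ι] [CommRing R] [IsLocalRing R]

lemma isUnit_coeff_iff_coeff_map_residue_ne_zero (p : R[X]) (n : ℕ) :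
    IsUnit (p.coeff n) ↔ (p.map (residue R)).coeff n ≠ 0 := by
  rw [coeff_map, residue_ne_zero_iff_isUnit]

lemma not_isUnit_map_residue_of_isUnit_coeff {p : R[X]} {n : ℕ} (hn : n ≠ 0)
    (h : IsUnit (p.coeff n)) : ¬IsUnit (p.map (residue R)) := fun hu => by
  rw [isUnit_coeff_iff_coeff_map_residue_ne_zero,
    eq_C_of_natDegree_eq_zero (natDegree_eq_zero_of_isUnit hu), coeff_C, if_neg hn] at h
  exact h rfl

lemma RowEquivE.exists_isUnit_coeff_of_succ (hι : 3 ≤ Fintype.card ι) {f : ι → R[X]}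
    (hf : IsUnimodular f) {i : ι} {d : ℕ} (hdeg : (f i).natDegree ≤ d + 1)
    (hunit : IsUnit ((f i).coeff (d + 1))) :
    ∃ f' p, RowEquivE f f' ∧ (f' p).natDegree ≤ d ∧ IsUnit ((f' p).coeff d) := by
  have hnat : (f i).natDegree = d + 1 := natDegree_eq_of_le_of_coeff_ne_zero hdeg hunit.ne_zero
  obtain ⟨a, ha, hg⟩ := exists_isUnit_and_monic_C_mul (p := f i) (by rwa [leadingCoeff, hnat])
  set g := C a * f i with hg_def
  have hgdeg : g.natDegree = d + 1 := by rw [natDegree_C_mul_of_isUnit ha, hnat]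
  have hmod : ∀ q : R[X], (q %ₘ g).natDegree ≤ d := fun q => by
    have := natDegree_modByMonic_lt q hg (fun h => by simp [h] at hgdeg)
    omega
  have hmod_map : ∀ q : R[X], ((q %ₘ g).map (residue R)).degree ≤ d := fun q =>
    degree_map_le.trans (degree_le_of_natDegree_le (hmod q))
  have h1 := RowEquivE.modByMonic_of_eq_C_mul f a hg_def
  set f1 := fun k => if k = i then f i else f k %ₘ g
  obtain ⟨j, hji, hj⟩ := ((h1.isUnimodular hf).map (mapRingHom (residue R))).exists_ne_ne_zero
    (i := i) (by simpa [f1] using not_isUnit_map_residue_of_isUnit_coeff d.succ_ne_zero hunit)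
  obtain ⟨p, hpi, hpj⟩ :=
    ENat.exists_ne_ne_of_three_le (by simpa [ENat.card_eq_coe_fintype_card] using hι) i j
  obtain ⟨f2, h2, hf2i, hf2p⟩ :=
    RowEquivE.exists_degree_map_eq (residue R) f1 (d := d) hpi hpj hj
      (by simpa [f1, hji] using hmod_map (f j)) (by simpa [f1, hpi] using hmod_map (f p))
  have h3 := RowEquivE.modByMonic_of_eq_C_mul f2 (i := i) a (by simpa [f1, hf2i] using hg_def)
  have hlt : ((f2 p).map (residue R)).degree < g.degree := by
    rw [hf2p, degree_eq_natDegree hg.ne_zero, hgdeg]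
    exact WithBot.coe_lt_coe.mpr d.lt_succ_self
  refine ⟨_, p, h1.trans (h2.trans h3), by simpa [hpi] using hmod (f2 p), ?_⟩
  rw [isUnit_coeff_iff_coeff_map_residue_ne_zero, if_neg hpi,
    Polynomial.map_modByMonic_eq_self _ hg hlt]
  exact coeff_ne_zero_of_eq_degree hf2p

lemma RowEquivE.single_of_isUnit_coeff (hι : 3 ≤ Fintype.card ι) (i₀ : ι) (d : ℕ) :
    ∀ {f : ι → R[X]}, IsUnimodular f → ∀ {i : ι}, (f i).natDegree ≤ d →
      IsUnit ((f i).coeff d) → RowEquivE f (Pi.single i₀ 1) := by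
  induction d with
  | zero =>
    intro f _ i hdeg hunit
    refine single_of_isUnit (by omega) i₀ (p := i) ?_
    rw [eq_C_of_natDegree_le_zero hdeg]
    exact isUnit_C.mpr hunit
  | succ d ih =>
    intro f hf i hdeg hunit
    obtain ⟨f', p, hff', hdeg', hunit'⟩ := exists_isUnit_coeff_of_succ hι hf hdeg hunit
    exact hff'.trans (ih (hff'.isUnimodular hf) hdeg' hunit')

end LocalRing

theorem stmt_11 {R : Type} [CommRing R] [IsLocalRing R] (n : ℕ) (hn : 3 ≤ n)
    (f : Fin n → R[X]) (hum : IsUnimodular f)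
    (hmonic : (f ⟨0, by omega⟩).Monic) :
    RowEquivE f (fun i => C ((f i).eval 0)) ∧
      RowEquivE (fun i => (f i).eval 0)
        (fun i : Fin n => if i.val = 0 then (1 : R) else 0) := by
  have hf : RowEquivE f (Pi.single ⟨0, by omega⟩ 1) :=
    RowEquivE.single_of_isUnit_coeff (by simpa using hn) _ _ hum le_rfl
      (by rw [hmonic.coeff_natDegree]; exact isUnit_one)
  have hf0 : RowEquivE (fun i => (f i).eval 0) (Pi.single ⟨0, by omega⟩ 1) := by
    simpa using hf.map_single (evalRingHom 0)
  constructor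
  · exact hf.trans (by simpa using (hf0.map_single C).symm)
  · convert hf0 using 1
    ext i
    simp [Pi.single_apply, Fin.ext_iff]
end

section
/- Let V be a valuation ring. Then every matrix of the form M = [[f(x), g(x), 0], [p(x), q(x), 0], [0, 0, 1]] in SL₃(V[x]) belongs to the elementary subgroup E₃(V[x]). -/
open Matrix Polynomial

theorem transvection_mem_elem_s12 {ι R : Type} [Fintype ι] [DecidableEq ι] [CommRing R] {i j : ι}
    (h : i ≠ j) (c : R) : transvection i j c ∈ Elem ι R :=
  Submonoid.subset_closure ⟨i, j, c, h, rfl⟩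

theorem det_eq_one_of_mem_elem {ι R : Type} [Fintype ι] [DecidableEq ι] [CommRing R]
    {M : Matrix ι ι R} (hM : M ∈ Elem ι R) : M.det = 1 := by
  have : Elem ι R ≤ MonoidHom.mker (detMonoidHom (n := ι) (R := R)) :=
    Submonoid.closure_le.mpr <| by
      rintro _ ⟨i, j, c, h, rfl⟩
      exact det_transvection_of_ne i j h c
  exact this hM

section FinThree

variable {R : Type} [CommRing R]

theorem transvection_zero_one (c : R) :
    transvection (0 : Fin 3) 1 c = !![1, c, 0; 0, 1, 0; 0, 0, 1] := by
  ext i j; fin_cases i <;> fin_cases j <;> simp [transvection, one_apply, single]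

theorem transvection_one_zero (c : R) :
    transvection (1 : Fin 3) 0 c = !![1, 0, 0; c, 1, 0; 0, 0, 1] := by
  ext i j; fin_cases i <;> fin_cases j <;> simp [transvection, one_apply, single]

theorem transvection_one_two (c : R) :
    transvection (1 : Fin 3) 2 c = !![1, 0, 0; 0, 1, c; 0, 0, 1] := by
  ext i j; fin_cases i <;> fin_cases j <;> simp [transvection, one_apply, single]

theorem transvection_two_zero (c : R) :
    transvection (2 : Fin 3) 0 c = !![1, 0, 0; 0, 1, 0; c, 0, 1] := by
  ext i j; fin_cases i <;> fin_cases j <;> simp [transvection, one_apply, single]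

theorem transvection_two_one (c : R) :
    transvection (2 : Fin 3) 1 c = !![1, 0, 0; 0, 1, 0; 0, c, 1] := by
  ext i j; fin_cases i <;> fin_cases j <;> simp [transvection, one_apply, single]

def sl2Embed (a b c d : R) : Matrix (Fin 3) (Fin 3) R :=
  !![a, b, 0; c, d, 0; 0, 0, 1]

theorem det_sl2Embed (a b c d : R) : (sl2Embed a b c d).det = a * d - b * c := by
  simp [sl2Embed, det_fin_three]

def HasElemCompletion (a b : R) : Prop :=
  ∃ c d : R, sl2Embed a b c d ∈ Elem (Fin 3) R

namespace HasElemCompletion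

variable {a a' b b' : R}

theorem sl2Embed_mem {p q : R} (h : HasElemCompletion a b) (hpq : a * q - b * p = 1) :
    sl2Embed a b p q ∈ Elem (Fin 3) R := by
  obtain ⟨c, d, hM⟩ := h
  have hcd : a * d - b * c = 1 := det_sl2Embed a b c d ▸ det_eq_one_of_mem_elem hM
  have key : sl2Embed a b p q = transvection 1 0 (p * d - q * c) * sl2Embed a b c d := by
    simp only [sl2Embed, transvection_one_zero, mul_fin_three]
    ext i j; fin_cases i <;> fin_cases j <;> simp <;> grind
  rw [key]
  exact mul_mem (transvection_mem_elem_s12 (by decide) _) hM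

/-- `[[a, b], [0, a⁻¹]] = diag(a, a⁻¹) · e₁₂(a⁻¹ b)`, and by Whitehead's lemma
`diag(a, a⁻¹) = w(a) w(-1)` with `w(x) = e₁₂(x) e₂₁(-x⁻¹) e₁₂(x)`. -/
theorem of_isUnit_left (ha : IsUnit a) (b : R) : HasElemCompletion a b := by
  obtain ⟨e, he⟩ := ha.exists_right_inv
  refine ⟨0, e, ?_⟩
  have key : sl2Embed a b 0 e = transvection 0 1 a * transvection 1 0 (-e) * transvection 0 1 a *
      (transvection 0 1 (-1) * transvection 1 0 1 * transvection 0 1 (-1)) *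
      transvection 0 1 (e * b) := by
    simp only [sl2Embed, transvection_zero_one, transvection_one_zero, mul_fin_three]
    ext i j; fin_cases i <;> fin_cases j <;> simp <;> grind
  rw [key]
  repeat' refine mul_mem ?_ ?_
  all_goals exact transvection_mem_elem_s12 (by decide) _

theorem add_mul_right (h : HasElemCompletion a b) (t : R) : HasElemCompletion a (b + a * t) := by
  obtain ⟨c, d, hM⟩ := h
  refine ⟨c, d + c * t, ?_⟩
  have key : sl2Embed a (b + a * t) c (d + c * t) = sl2Embed a b c d * transvection 0 1 t := by
    simp only [sl2Embed, transvection_zero_one, mul_fin_three]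
    ext i j; fin_cases i <;> fin_cases j <;> simp <;> ring
  rw [key]
  exact mul_mem hM (transvection_mem_elem_s12 (by decide) _)

theorem add_mul_left (h : HasElemCompletion a b) (t : R) : HasElemCompletion (a + b * t) b := by
  obtain ⟨c, d, hM⟩ := h
  refine ⟨c + d * t, d, ?_⟩
  have key : sl2Embed (a + b * t) b (c + d * t) d = sl2Embed a b c d * transvection 1 0 t := by
    simp only [sl2Embed, transvection_one_zero, mul_fin_three]
    ext i j; fin_cases i <;> fin_cases j <;> simp
  rw [key]
  exact mul_mem hM (transvection_mem_elem_s12 (by decide) _)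

theorem rotate (h : HasElemCompletion a b) : HasElemCompletion b (-a) := by
  obtain ⟨c, d, hM⟩ := h
  refine ⟨d, -c, ?_⟩
  have key : sl2Embed b (-a) d (-c) = sl2Embed a b c d *
      (transvection 0 1 (-1) * transvection 1 0 1 * transvection 0 1 (-1)) := by
    simp only [sl2Embed, transvection_zero_one, transvection_one_zero, mul_fin_three]
    ext i j; fin_cases i <;> fin_cases j <;> simp
  rw [key]
  refine mul_mem hM ?_
  repeat' refine mul_mem ?_ ?_
  all_goals exact transvection_mem_elem_s12 (by decide) _

theorem of_rotate (h : HasElemCompletion b (-a)) : HasElemCompletion a b := by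
  obtain ⟨c, d, hM⟩ := h
  refine ⟨-d, c, ?_⟩
  have key : sl2Embed a b (-d) c = sl2Embed b (-a) c d *
      (transvection 0 1 1 * transvection 1 0 (-1) * transvection 0 1 1) := by
    simp only [sl2Embed, transvection_zero_one, transvection_one_zero, mul_fin_three]
    ext i j; fin_cases i <;> fin_cases j <;> simp
  rw [key]
  refine mul_mem hM ?_
  repeat' refine mul_mem ?_ ?_
  all_goals exact transvection_mem_elem_s12 (by decide) _

theorem of_isUnit_right (hb : IsUnit b) (a : R) : HasElemCompletion a b :=
  (of_isUnit_left hb (-a)).of_rotate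

/-- The second block is moved to rows and columns `{0, 2}` by a signed permutation, multiplied
with the first, and the product is reduced back to the block form by transvections. -/
theorem mul_left (h : HasElemCompletion a b) (h' : HasElemCompletion a' b) :
    HasElemCompletion (a * a') b := by
  obtain ⟨p, q, hM⟩ := h
  obtain ⟨p', q', hM'⟩ := h'
  have hdet : a * q - b * p = 1 := det_sl2Embed a b p q ▸ det_eq_one_of_mem_elem hM
  refine ⟨p' + p * q' * a', q * q', ?_⟩
  have key : sl2Embed (a * a') b (p' + p * q' * a') (q * q') =
      transvection 1 2 (-1) * transvection 2 1 1 * transvection 1 2 (-1) *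
      transvection 2 1 (-q') * sl2Embed a b p q *
      (transvection 1 2 1 * transvection 2 1 (-1) * transvection 1 2 1 * sl2Embed a' b p' q' *
        (transvection 1 2 (-1) * transvection 2 1 1 * transvection 1 2 (-1))) *
      transvection 1 2 a * transvection 2 0 (-(p * a')) * transvection 2 1 (-q) := by
    simp only [sl2Embed, transvection_one_two, transvection_two_zero, transvection_two_one,
      mul_fin_three]
    ext i j; fin_cases i <;> fin_cases j <;> simp <;> grind
  rw [key]
  repeat' refine mul_mem ?_ ?_
  all_goals first | assumption | exact transvection_mem_elem_s12 (by decide) _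

theorem mul_right (h : HasElemCompletion a b) (h' : HasElemCompletion a b') :
    HasElemCompletion a (b * b') :=
  (h.rotate.mul_left h'.rotate).of_rotate

theorem pow_right (h : HasElemCompletion a b) (n : ℕ) : HasElemCompletion a (b ^ n) := by
  induction n with
  | zero => exact of_isUnit_right (pow_zero b ▸ isUnit_one) a
  | succ n ih => exact pow_succ b n ▸ ih.mul_right h

end HasElemCompletion

end FinThree

theorem IsCoprime.of_eq_mul_add_mul {R : Type} [CommRing R] {x y z w r : R} (h : IsCoprime x y)
    (hy : y = z * w + x * r) : IsCoprime x w := by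
  rw [hy, IsCoprime.add_mul_left_right_iff] at h
  exact h.of_mul_right_right

section Polynomial

variable {R : Type} [CommRing R]

theorem hasElemCompletion_X_of_isUnit_coeff_zero {M : R[X]} (h0 : IsUnit (M.coeff 0)) :
    HasElemCompletion M X := by
  have h := (HasElemCompletion.of_isUnit_left (isUnit_C.mpr h0) X).add_mul_left M.divX
  rwa [add_comm, X_mul_divX_add] at h

theorem HasElemCompletion.X_mul_add {M T : R[X]} (h0 : IsUnit (M.coeff 0))
    (hT : HasElemCompletion M T) (r : R[X]) : HasElemCompletion M (X * T + M * r) :=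
  ((hasElemCompletion_X_of_isUnit_coeff_zero h0).mul_right hT).add_mul_right r

theorem exists_eq_X_mul_add {M : R[X]} {e : R} (he : M.coeff 0 * e = 1) (S : R[X]) :
    ∃ T : R[X], S = X * T + M * C (S.coeff 0 * e) ∧
      (∀ k, T.coeff k = S.coeff (k + 1) - S.coeff 0 * e * M.coeff (k + 1)) ∧
      T.natDegree ≤ max S.natDegree M.natDegree - 1 := by
  set U := S - M * C (S.coeff 0 * e)
  have hU0 : U.coeff 0 = 0 := by
    simp only [U, coeff_sub, coeff_mul_C]
    linear_combination -S.coeff 0 * he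
  have hcoeff : ∀ k, U.divX.coeff k = S.coeff (k + 1) - S.coeff 0 * e * M.coeff (k + 1) := by
    intro k
    simp only [U, coeff_divX, coeff_sub, coeff_mul_C]
    ring
  refine ⟨U.divX, ?_, hcoeff, natDegree_le_iff_coeff_eq_zero.mpr fun k hk => ?_⟩
  · have := X_mul_divX_add U
    rw [hU0, C_0, add_zero] at this
    rw [this]
    ring
  · rw [hcoeff, coeff_eq_zero_of_natDegree_lt (by omega : S.natDegree < k + 1),
      coeff_eq_zero_of_natDegree_lt (by omega : M.natDegree < k + 1)]
    ring

theorem dvd_pow_coeff_of_isCoprime_C {F : R[X]} {c : R} (h : IsCoprime F (C c)) {k : ℕ}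
    (hk : k ≠ 0) : ∃ N : ℕ, c ∣ F.coeff k ^ N := by
  let φ := Ideal.Quotient.mk (Ideal.span {c})
  have hφc : φ c = 0 := Ideal.Quotient.eq_zero_iff_mem.mpr (Ideal.mem_span_singleton_self c)
  have hunit : IsUnit (F.map φ) := by
    obtain ⟨u, v, huv⟩ := h
    refine IsUnit.of_mul_eq_one_right (u.map φ) ?_
    simpa [hφc] using congrArg (map φ) huv
  obtain ⟨N, hN⟩ := (isUnit_iff_coeff_isUnit_isNilpotent.mp hunit).2 k hk
  refine ⟨N, Ideal.mem_span_singleton.mp (Ideal.Quotient.eq_zero_iff_mem.mp ?_)⟩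
  rwa [coeff_map, ← map_pow] at hN

theorem exists_eq_C_mul_of_coeff_eq_mul (S : R[X]) (c : R) (r : ℕ → R)
    (hr : ∀ k, S.coeff k = c * r k) :
    ∃ S₁ : R[X], S = C c * S₁ ∧ S₁.natDegree ≤ S.natDegree ∧
      ∀ k ≤ S.natDegree, S₁.coeff k = r k := by
  refine ⟨∑ k ∈ Finset.range (S.natDegree + 1), monomial k (r k), ?_, ?_, fun k hk => ?_⟩
  · ext n
    rw [coeff_C_mul, finsetSum_coeff]
    simp only [coeff_monomial, Finset.sum_ite_eq', Finset.mem_range]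
    split_ifs with hn
    · exact hr n
    · rw [coeff_eq_zero_of_natDegree_lt (by omega), mul_zero]
  · refine natDegree_sum_le_of_forall_le _ _ fun k hk => ?_
    exact (natDegree_monomial_le _).trans (Nat.lt_succ_iff.mp (Finset.mem_range.mp hk))
  · simp [coeff_monomial, Nat.lt_succ_iff.mpr hk]

/-- Shifting by `X` moves a unit coefficient of `S` to the constant term, where `hlow` applies. -/
theorem hasElemCompletion_of_isUnit_coeff [IsLocalRing R] {M : R[X]} (h0 : IsUnit (M.coeff 0))
    (hlow : ∀ S : R[X], S.natDegree < M.natDegree → IsUnit (S.coeff 0) → IsCoprime M S →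
      HasElemCompletion M S) (ν : ℕ) :
    ∀ S : R[X], S.natDegree < M.natDegree → IsUnit (S.coeff ν) → IsCoprime M S →
      HasElemCompletion M S := by
  induction ν with
  | zero => exact hlow
  | succ ν ih =>
    intro S hdeg hν hMS
    by_cases hS0 : IsUnit (S.coeff 0)
    · exact hlow S hdeg hS0 hMS
    obtain ⟨e, he⟩ := h0.exists_right_inv
    obtain ⟨T, hST, hT, hTdeg⟩ := exists_eq_X_mul_add he S
    have hTν : IsUnit (T.coeff ν) := by
      have hsum : S.coeff (ν + 1) = T.coeff ν + S.coeff 0 * (e * M.coeff (ν + 1)) := by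
        rw [hT]; ring
      rw [hsum] at hν
      exact (IsLocalRing.isUnit_or_isUnit_of_isUnit_add hν).resolve_right
        fun h => hS0 (isUnit_of_mul_isUnit_left h)
    have hMT : IsCoprime M T := hMS.of_eq_mul_add_mul hST
    rw [hST]
    exact (ih T (by omega) hTν hMT).X_mul_add h0 _

theorem hasElemCompletion_of_forall_natDegree_lt {M : R[X]} (h0 : IsUnit (M.coeff 0))
    (hsmall : ∀ S : R[X], S.natDegree < M.natDegree → IsCoprime M S → HasElemCompletion M S)
    (S : R[X]) (hMS : IsCoprime M S) : HasElemCompletion M S := by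
  induction hn : S.natDegree using Nat.strong_induction_on generalizing S with
  | _ n ih =>
  by_cases hlt : S.natDegree < M.natDegree
  · exact hsmall S hlt hMS
  rcases Nat.eq_zero_or_pos n with rfl | hpos
  · rw [eq_C_of_natDegree_eq_zero (by omega : M.natDegree = 0)]
    exact .of_isUnit_left (isUnit_C.mpr h0) S
  obtain ⟨e, he⟩ := h0.exists_right_inv
  obtain ⟨T, hST, -, hTdeg⟩ := exists_eq_X_mul_add he S
  have hMT : IsCoprime M T := hMS.of_eq_mul_add_mul hST
  rw [hST]
  exact (ih T.natDegree (by omega) T hMT rfl).X_mul_add h0 _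

end Polynomial

section ValuationRing

variable {R : Type} [CommRing R] [PreValuationRing R]

open scoped Classical in
theorem exists_mem_forall_dvd {ι : Type} {s : Finset ι} (hs : s.Nonempty) (g : ι → R) :
    ∃ j ∈ s, ∀ k ∈ s, g j ∣ g k := by
  obtain ⟨j, hj, hmax⟩ := s.exists_max_image (fun k => Ideal.span {g k}) hs
  exact ⟨j, hj, fun k hk => Ideal.span_singleton_le_span_singleton.mp (hmax k hk)⟩

theorem exists_eq_C_mul_isUnit_coeff {S : R[X]} (hS : S ≠ 0) :
    ∃ (c : R) (S₁ : R[X]) (j : ℕ), S = C c * S₁ ∧ S₁.natDegree ≤ S.natDegree ∧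
      IsUnit (S₁.coeff j) := by
  obtain ⟨j, hj, hdvd⟩ := exists_mem_forall_dvd (support_nonempty.mpr hS) S.coeff
  have hdvd' : ∀ k, S.coeff j ∣ S.coeff k := fun k => by
    by_cases hk : k ∈ S.support
    · exact hdvd k hk
    · rw [notMem_support_iff.mp hk]; exact dvd_zero _
  choose r hr using hdvd'
  obtain ⟨S₁, hS₁, hdeg, hcoeff⟩ :=
    exists_eq_C_mul_of_coeff_eq_mul S (S.coeff j) (Function.update r j 1) fun k => by
      rcases eq_or_ne k j with rfl | hk
      · simp
      · simpa [hk] using hr k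
  refine ⟨S.coeff j, S₁, j, hS₁, hdeg, ?_⟩
  rw [hcoeff j (le_natDegree_of_mem_supp j hj), Function.update_self]
  exact isUnit_one

theorem hasElemCompletion_C_of_dvd_pow {F G : R[X]} {u a : R} (hu : IsUnit u)
    (hF : F = C u + C a * G) (N : ℕ) :
    ∀ c, c ∣ a ^ N → IsCoprime F (C c) → HasElemCompletion F (C c) := by
  have hdvd : ∀ b, b ∣ a → HasElemCompletion F (C b) := by
    rintro b ⟨t, rfl⟩
    rw [hF, C_mul, mul_assoc]
    exact (HasElemCompletion.of_isUnit_left (isUnit_C.mpr hu) _).add_mul_left _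
  induction N with
  | zero =>
    intro c hc _
    exact .of_isUnit_right (isUnit_C.mpr (isUnit_of_dvd_one (pow_zero a ▸ hc))) F
  | succ N ih =>
    intro c hc hFc
    rcases ValuationRing.dvd_total c (a ^ N) with h | ⟨e, rfl⟩
    · exact ih c h hFc
    obtain ⟨d, hd⟩ := hc
    -- `aᴺ` kills `a - e d`, and comparing `a - e d` with `e` gives `e ∣ a` or `c = 0`
    have hz : a ^ N * (a - e * d) = 0 := by linear_combination hd
    rcases ValuationRing.dvd_total e (a - e * d) with ⟨s, hs⟩ | ⟨s, hs⟩
    · have hea : e ∣ a := ⟨s + d, by linear_combination hs⟩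
      rw [C_mul, C_pow]
      exact ((hdvd a dvd_rfl).pow_right N).mul_right (hdvd e hea)
    · have hc0 : a ^ N * e = 0 := by rw [hs, ← mul_assoc, hz, zero_mul]
      rw [hc0, C_0] at hFc ⊢
      exact .of_isUnit_left (isCoprime_zero_right.mp hFc) 0

theorem hasElemCompletion_C_of_isCoprime {F : R[X]} {c : R} (h0 : IsUnit (F.coeff 0))
    (hc : IsCoprime F (C c)) : HasElemCompletion F (C c) := by
  rcases Nat.eq_zero_or_pos F.natDegree with hdeg | hdeg
  · rw [eq_C_of_natDegree_eq_zero hdeg]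
    exact .of_isUnit_left (isUnit_C.mpr h0) _
  obtain ⟨j, hj, hdvd⟩ := exists_mem_forall_dvd (Finset.nonempty_Icc.mpr hdeg) F.coeff
  have hj0 : j ≠ 0 := by have := (Finset.mem_Icc.mp hj).1; omega
  have hdvd' : C (F.coeff j) ∣ F - C (F.coeff 0) := by
    refine (C_dvd_iff_dvd_coeff _ _).mpr fun k => ?_
    rcases Nat.eq_zero_or_pos k with rfl | hk
    · simp
    rw [coeff_sub, coeff_C, if_neg hk.ne', sub_zero]
    by_cases hkF : k ≤ F.natDegree
    · exact hdvd k (Finset.mem_Icc.mpr ⟨hk, hkF⟩)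
    · rw [coeff_eq_zero_of_natDegree_lt (not_le.mp hkF)]; exact dvd_zero _
  obtain ⟨G, hG⟩ := hdvd'
  obtain ⟨N, hN⟩ := dvd_pow_coeff_of_isCoprime_C hc hj0
  exact hasElemCompletion_C_of_dvd_pow h0 (by rw [← hG]; ring) N c hN hc

end ValuationRing

section Main

variable {R : Type} [CommRing R] [PreValuationRing R] [Nontrivial R]

theorem hasElemCompletion_of_natDegree_lt {M : R[X]} (h0 : IsUnit (M.coeff 0))
    (hlow : ∀ S : R[X], S.natDegree < M.natDegree → IsUnit (S.coeff 0) → IsCoprime M S →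
      HasElemCompletion M S)
    (S : R[X]) (hS : S.natDegree < M.natDegree) (hMS : IsCoprime M S) :
    HasElemCompletion M S := by
  rcases eq_or_ne S 0 with rfl | hS0
  · exact .of_isUnit_left (isCoprime_zero_right.mp hMS) 0
  obtain ⟨c, S₁, j, rfl, hdeg, hj⟩ := exists_eq_C_mul_isUnit_coeff hS0
  exact (hasElemCompletion_C_of_isCoprime h0 hMS.of_mul_right_left).mul_right
    (hasElemCompletion_of_isUnit_coeff h0 hlow j S₁ (hdeg.trans_lt hS) hj hMS.of_mul_right_right)

theorem hasElemCompletion_of_isCoprime {M S : R[X]} (h0 : IsUnit (M.coeff 0))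
    (hMS : IsCoprime M S) : HasElemCompletion M S := by
  induction hn : M.natDegree using Nat.strong_induction_on generalizing M S with
  | _ n ih =>
  have hlow : ∀ S : R[X], S.natDegree < M.natDegree → IsUnit (S.coeff 0) → IsCoprime M S →
      HasElemCompletion M S := fun S hS hS0 hMS =>
    (ih S.natDegree (hn ▸ hS) hS0 hMS.symm.neg_right rfl).of_rotate
  exact hasElemCompletion_of_forall_natDegree_lt h0
    (hasElemCompletion_of_natDegree_lt h0 hlow) S hMS

end Main

theorem stmt_12 {V : Type} [CommRing V] (hV : ∀ a b : V, a ∣ b ∨ b ∣ a)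
    (f g p q : V[X])
    (hdet : (!![f, g, 0; p, q, 0; 0, 0, 1] : Matrix (Fin 3) (Fin 3) V[X]).det = 1) :
    !![f, g, 0; p, q, 0; 0, 0, 1] ∈ Elem (Fin 3) V[X] := by
  have hfg : f * q - g * p = 1 := by simpa [det_fin_three] using hdet
  rcases subsingleton_or_nontrivial V with _ | _
  · convert one_mem (Elem (Fin 3) V[X])
    exact Subsingleton.elim _ _
  have : PreValuationRing V := PreValuationRing.iff_dvd_total.mpr ⟨hV⟩
  have h0 : f.coeff 0 * q.coeff 0 + -(g.coeff 0 * p.coeff 0) = 1 := by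
    simpa [mul_coeff_zero, sub_eq_add_neg] using congrArg (coeff · 0) hfg
  have hrow : HasElemCompletion f g := by
    rcases IsLocalRing.isUnit_or_isUnit_of_add_one h0 with h | h
    · exact hasElemCompletion_of_isCoprime (isUnit_of_mul_isUnit_left h)
        ⟨q, -p, by linear_combination hfg⟩
    · have hg : IsUnit (g.coeff 0) := isUnit_of_mul_isUnit_left ((IsUnit.neg_iff _).mp h)
      exact .of_rotate (hasElemCompletion_of_isCoprime hg ⟨-p, -q, by linear_combination hfg⟩)
  exact hrow.sl2Embed_mem hfg
end
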